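/- For every t ≠ 0 one has 1 ≤ G⁻¹(t)/t ≤ 2/√3; equivalently, |t| ≤ |G⁻¹(t)| ≤ (2/√3)|t| for all t ∈ ℝ. -/
import Mathlib


open Real Filter Set

/-- The constant α = (9+3√5)/2. -/
noncomputable def alph : ℝ := (9 + 3 * Real.sqrt 5) / 2

/-- The constant β = 2 α^{3/2} √(α−1). -/
noncomputable def bet : ℝ := 2 * alph ^ ((3 : ℝ) / 2) * Real.sqrt (alph - 1)

/-- The change-of-variable function g (extended evenly to negative arguments):
g(s) = √(1 − k s²) for |s| < (αk)^{−1/2}, and g(s) = 1/(βk s²) + √3/2 for |s| ≥ (αk)^{−1/2}. -/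
noncomputable def g (k s : ℝ) : ℝ :=
  if |s| < 1 / Real.sqrt (alph * k) then Real.sqrt (1 - k * s ^ 2)
  else 1 / (bet * k * s ^ 2) + Real.sqrt 3 / 2

/-- G(t) = ∫₀ᵗ g(s) ds. -/
noncomputable def G (k t : ℝ) : ℝ := ∫ s in (0 : ℝ)..t, g k s


lemma sqrt5_ge : (2:ℝ) ≤ Real.sqrt 5 := by
  nlinarith [Real.sq_sqrt (by norm_num : (5:ℝ) ≥ 0), Real.sqrt_nonneg 5]

lemma alph_ge : (15/2 : ℝ) ≤ alph := by
  unfold alph; nlinarith [sqrt5_ge]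

lemma alph_pos : (0:ℝ) < alph := by linarith [alph_ge]

lemma sqrt3_le : Real.sqrt 3 ≤ 7/4 := by
  nlinarith [Real.sq_sqrt (by norm_num : (3:ℝ) ≥ 0), Real.sqrt_nonneg 3]

lemma bet_ge : 8 * alph ≤ bet := by
  unfold bet
  have h1 : alph ^ ((3:ℝ)/2) = alph * Real.sqrt alph := by
    rw [show (3:ℝ)/2 = 1 + 1/2 by norm_num, Real.rpow_add alph_pos, Real.rpow_one,
      Real.sqrt_eq_rpow]
  have h2 : (2:ℝ) ≤ Real.sqrt alph := by
    nlinarith [Real.sq_sqrt alph_pos.le, Real.sqrt_nonneg alph, alph_ge]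
  have h3 : (2:ℝ) ≤ Real.sqrt (alph - 1) := by
    nlinarith [Real.sq_sqrt (by linarith [alph_ge] : (0:ℝ) ≤ alph - 1),
      Real.sqrt_nonneg (alph - 1), alph_ge]
  rw [h1]
  nlinarith [alph_pos, Real.sqrt_nonneg alph, Real.sqrt_nonneg (alph - 1),
    mul_le_mul h2 h3 (by norm_num : (0:ℝ) ≤ 2) (Real.sqrt_nonneg alph)]

lemma g_even (k s : ℝ) : g k (-s) = g k s := by simp [g]

lemma g_le_one {k : ℝ} (hk : 0 < k) (s : ℝ) : g k s ≤ 1 := by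
  unfold g
  split_ifs with h
  · exact Real.sqrt_le_one.mpr (by nlinarith [sq_nonneg s])
  · push_neg at h
    have hak : 0 < alph * k := mul_pos alph_pos hk
    have hs2 : 1 / (alph * k) ≤ s ^ 2 := by
      have := Real.sq_sqrt hak.le
      have h1 : (1 / Real.sqrt (alph * k)) ^ 2 ≤ |s| ^ 2 := by
        apply sq_le_sq' _ h
        · have : 0 < 1 / Real.sqrt (alph * k) :=
            div_pos one_pos (Real.sqrt_pos.mpr hak)
          linarith [abs_nonneg s]
      rw [div_pow, one_pow, this, sq_abs] at h1
      exact h1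
    have hbet : 8 * alph ≤ bet := bet_ge
    have hb : 8 ≤ bet * k * s ^ 2 := by
      have h8 : 8 * alph * (k * s ^ 2) ≤ bet * (k * s ^ 2) := by
        apply mul_le_mul_of_nonneg_right hbet; positivity
      have h9 : (1:ℝ) / alph ≤ k * s ^ 2 := by
        rw [div_le_iff₀ alph_pos]
        have := (div_le_iff₀ hak).mp hs2
        nlinarith
      have : 8 * alph * (1 / alph) ≤ 8 * alph * (k * s ^ 2) := by
        apply mul_le_mul_of_nonneg_left h9; linarith [alph_pos]
      rw [mul_one_div, mul_div_assoc, div_self alph_pos.ne'] at this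
      nlinarith
    have h18 : 1 / (bet * k * s ^ 2) ≤ 1 / 8 := by
      apply one_div_le_one_div_of_le (by norm_num) hb
    nlinarith [sqrt3_le]

lemma g_ge {k : ℝ} (hk : 0 < k) (s : ℝ) : Real.sqrt 3 / 2 ≤ g k s := by
  unfold g
  split_ifs with h
  · have hak : 0 < alph * k := mul_pos alph_pos hk
    have hs2 : s ^ 2 < 1 / (alph * k) := by
      have h1 : |s| ^ 2 < (1 / Real.sqrt (alph * k)) ^ 2 := by
        apply sq_lt_sq' _ h
        have : 0 ≤ |s| := abs_nonneg s
        linarith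
      rw [div_pow, one_pow, Real.sq_sqrt hak.le, sq_abs] at h1
      exact h1
    have hks : k * s ^ 2 < 1 / alph := by
      rw [lt_div_iff₀ alph_pos]
      have := (lt_div_iff₀ hak).mp hs2
      nlinarith
    have hq : (1:ℝ) / alph ≤ 1 / 4 := by
      apply one_div_le_one_div_of_le (by norm_num); linarith [alph_ge]
    have : Real.sqrt (3/4) ≤ Real.sqrt (1 - k * s ^ 2) := by
      apply Real.sqrt_le_sqrt; linarith
    calc Real.sqrt 3 / 2 = Real.sqrt (3/4) := by
          rw [show (3:ℝ)/4 = (Real.sqrt 3 / 2)^2 by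
            rw [div_pow, Real.sq_sqrt (by norm_num : (0:ℝ) ≤ 3)]; norm_num,
            Real.sqrt_sq (by positivity)]
      _ ≤ _ := this
  · have hak : 0 < alph * k := mul_pos alph_pos hk
    have : 0 < 1 / (bet * k * s ^ 2) := by
      push_neg at h
      have hs : s ≠ 0 := by
        intro h0; rw [h0] at h
        have h1 : 0 < 1 / Real.sqrt (alph * k) :=
          div_pos one_pos (Real.sqrt_pos.mpr hak)
        simp at h
        have h2 : 0 < Real.sqrt (alph * k) := Real.sqrt_pos.mpr hak
        linarith
      have hbet : 0 < bet := lt_of_lt_of_le (by nlinarith [alph_pos]) bet_ge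
      have hs2 : 0 < s ^ 2 := by positivity
      positivity
    linarith

lemma g_meas (k : ℝ) : Measurable (g k) := by
  unfold g
  have h1 : Measurable fun s : ℝ => Real.sqrt (1 - k * s ^ 2) :=
    Real.continuous_sqrt.measurable.comp (by fun_prop)
  have h2 : Measurable fun s : ℝ => 1 / (bet * k * s ^ 2) + Real.sqrt 3 / 2 := by
    apply Measurable.add _ measurable_const
    exact Measurable.div measurable_const (by fun_prop)
  exact Measurable.ite (measurableSet_lt measurable_abs measurable_const) h1 h2

lemma g_intInt {k : ℝ} (hk : 0 < k) (a b : ℝ) :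
    IntervalIntegrable (g k) MeasureTheory.volume a b := by
  apply IntervalIntegrable.mono_fun' (g := fun _ => (1:ℝ)) intervalIntegrable_const
    ((g_meas k).aestronglyMeasurable).restrict
  filter_upwards with s
  rw [Real.norm_eq_abs, abs_of_nonneg]
  · exact g_le_one hk s
  · have := g_ge hk s
    have h3 : 0 ≤ Real.sqrt 3 / 2 := by positivity
    linarith

lemma G_le {k : ℝ} (hk : 0 < k) {t : ℝ} (ht : 0 ≤ t) : G k t ≤ t := by
  have : G k t ≤ ∫ s in (0:ℝ)..t, (1:ℝ) := by
    apply intervalIntegral.integral_mono_on ht (g_intInt hk 0 t)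
      intervalIntegrable_const
    intro s _; exact g_le_one hk s
  simpa using this

lemma G_ge {k : ℝ} (hk : 0 < k) {t : ℝ} (ht : 0 ≤ t) :
    Real.sqrt 3 / 2 * t ≤ G k t := by
  have h : (∫ s in (0:ℝ)..t, (Real.sqrt 3 / 2 : ℝ)) ≤ G k t := by
    apply intervalIntegral.integral_mono_on ht intervalIntegrable_const
      (g_intInt hk 0 t)
    intro s _; exact g_ge hk s
  rw [intervalIntegral.integral_const, smul_eq_mul] at h
  linarith

lemma G_neg (k t : ℝ) : G k (-t) = - G k t := by
  unfold G
  rw [intervalIntegral.integral_symm]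
  congr 1
  have he : (fun s => g k s) = fun s => g k (-s) := by
    funext x; rw [g_even]
  calc (∫ s in (-t)..(0:ℝ), g k s) = ∫ s in (-t)..(0:ℝ), g k (-s) := by rw [← he]
    _ = ∫ s in (-0:ℝ)..(- -t), g k s := intervalIntegral.integral_comp_neg _
    _ = ∫ s in (0:ℝ)..t, g k s := by norm_num

/-- For t ≠ 0, 1 ≤ G⁻¹(t)/t ≤ 2/√3; equivalently |t| ≤ |G⁻¹(t)| ≤ (2/√3)|t| for all t. -/
theorem stmt9 (k : ℝ) (hk : 0 < k) (Ginv : ℝ → ℝ)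
    (hL : Function.LeftInverse Ginv (G k)) (hR : Function.RightInverse Ginv (G k)) :
    (∀ t : ℝ, t ≠ 0 → 1 ≤ Ginv t / t ∧ Ginv t / t ≤ 2 / Real.sqrt 3) ∧
    (∀ t : ℝ, |t| ≤ |Ginv t| ∧ |Ginv t| ≤ 2 / Real.sqrt 3 * |t|) := by
  have hs3 : 0 < Real.sqrt 3 := Real.sqrt_pos.mpr (by norm_num)
  -- the two-sided interval inequality, stated for |·|
  have habs : ∀ t : ℝ, |t| ≤ |Ginv t| ∧ |Ginv t| ≤ 2 / Real.sqrt 3 * |t| := by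
    intro t
    set u := Ginv t with hu
    have ht : G k u = t := hR t
    have key : ∀ v : ℝ, 0 ≤ v → v ≤ 2 / Real.sqrt 3 * G k v ∧ G k v ≤ v := by
      intro v hv
      have h1 := G_ge hk hv
      have h2 := G_le hk hv
      refine ⟨?_, h2⟩
      have h3 := mul_le_mul_of_nonneg_left h1
        (le_of_lt (by positivity : (0:ℝ) < 2 / Real.sqrt 3))
      have h4 : 2 / Real.sqrt 3 * (Real.sqrt 3 / 2 * v) = v := by
        field_simp
      linarith
    rcases le_total 0 u with h | h
    · obtain ⟨h1, h2⟩ := key u h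
      have ht0 : 0 ≤ t := by
        rw [← ht]
        have := G_ge hk h
        nlinarith [Real.sqrt_nonneg 3]
      rw [abs_of_nonneg ht0, abs_of_nonneg h, ← ht]
      exact ⟨h2, h1⟩
    · obtain ⟨h1, h2⟩ := key (-u) (by linarith)
      rw [G_neg, ht] at h1 h2
      have ht0 : t ≤ 0 := by
        have := G_ge hk (by linarith : (0:ℝ) ≤ -u)
        rw [G_neg, ht] at this
        nlinarith [Real.sqrt_nonneg 3]
      rw [abs_of_nonpos ht0, abs_of_nonpos h]
      constructor
      · linarith
      · linarith
  refine ⟨?_, habs⟩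
  intro t ht0
  obtain ⟨h1, h2⟩ := habs t
  set u := Ginv t with hu
  have ht : G k u = t := hR t
  have hGneg : ∀ v : ℝ, v ≤ 0 → G k v ≤ 0 := by
    intro v hv
    have := G_ge hk (by linarith : (0:ℝ) ≤ -v)
    rw [G_neg] at this
    nlinarith [Real.sqrt_nonneg 3]
  have hGpos : ∀ v : ℝ, 0 ≤ v → 0 ≤ G k v := by
    intro v hv
    have := G_ge hk hv
    nlinarith [Real.sqrt_nonneg 3]
  rcases lt_trichotomy t 0 with hlt | heq | hgt
  · -- t < 0 ⇒ u < 0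
    have hun : u < 0 := by
      rcases le_or_gt 0 u with h | h
      · have := hGpos u h; rw [ht] at this; linarith
      · exact h
    rw [abs_of_nonpos hlt.le, abs_of_nonpos hun.le] at h1 h2
    have hq : u / t = (-u) / (-t) := by rw [neg_div_neg_eq]
    rw [hq]
    constructor
    · rw [le_div_iff₀ (by linarith : (0:ℝ) < -t)]; linarith
    · rw [div_le_iff₀ (by linarith : (0:ℝ) < -t)]; linarith [h2]
  · exact absurd heq ht0
  · -- t > 0 ⇒ u > 0
    have hup : 0 < u := by
      rcases le_or_gt 0 u with h | h
      · rcases h.eq_or_lt with h' | h'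
        · exfalso; rw [← ht, ← h'] at hgt; simp [G] at hgt
        · exact h'
      · have := hGneg u h.le; rw [ht] at this; linarith
    rw [abs_of_nonneg hgt.le, abs_of_nonneg hup.le] at h1 h2
    constructor
    · rw [le_div_iff₀ hgt]; linarith
    · rw [div_le_iff₀ hgt]; linarith [h2]
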